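/- Let L be an α-stable Lévy process with scale C > 0 and skewness β ∈ [−1,1], where α ∈ (0,2), α ≠ 1, and let p > α. Then for every ε > 0 and every δ > 0 there exists θ_0 > 0 such that for every θ ∈ (0, θ_0): limsup_{n→∞} P( V_p^n(L)_θ ≥ ε ) ≤ δ. -/

import Mathlib

open MeasureTheory ProbabilityTheory Filter Real

noncomputable section

variable {Ω : Type*} [MeasurableSpace Ω]

/-- The equidistant `p`-variation `V_p^n(X)_t = ∑_{i=1}^{⌊nt⌋} |X_{i/n} - X_{(i-1)/n}|^p`. -/
def pVar (p : ℝ) (n : ℕ) (X : ℝ → Ω → ℝ) (t : ℝ) (ω : Ω) : ℝ :=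
  ∑ i ∈ Finset.Icc 1 ⌊(n : ℝ) * t⌋₊,
    |X ((i : ℝ) / (n : ℝ)) ω - X (((i : ℝ) - 1) / (n : ℝ)) ω| ^ p

/-- An `α`-stable Lévy process with scale `C` and skewness `β`: `L_0 = 0` a.s.,
independent and stationary increments, and the prescribed characteristic function. -/
structure IsStableLevy (P : Measure Ω) (α C β : ℝ) (L : ℝ → Ω → ℝ) : Prop where
  measurable : ∀ t : ℝ, Measurable (L t)
  zero : ∀ᵐ ω ∂P, L 0 ω = 0
  indepIncr : ∀ (m : ℕ) (t : Fin (m + 1) → ℝ), (∀ i, 0 ≤ t i) → StrictMono t →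
    iIndepFun
      (fun i : Fin m => fun ω => L (t i.succ) ω - L (t i.castSucc) ω) P
  statIncr : ∀ s t : ℝ, 0 ≤ s → 0 ≤ t →
    Measure.map (fun ω => L (t + s) ω - L s ω) P = Measure.map (L t) P
  charFun : ∀ t : ℝ, 0 ≤ t → ∀ l : ℝ,
    ∫ ω, Complex.exp (Complex.I * (l : ℂ) * (L t ω : ℂ)) ∂P =
      Complex.exp (Complex.ofReal (-(t * C ^ α * |l| ^ α)) *
        (1 - Complex.I * Complex.ofReal (β * Real.sign l * Real.tan (π * α / 2))))

/-- The scale `C'` of the limiting process. -/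
def Cprime (α C p : ℝ) : ℝ :=
  C ^ p * (Real.cos (π * α / (2 * p)) * Real.Gamma (1 - α / p) /
    (Real.cos (π * α / 2) * Real.Gamma (1 - α))) ^ (p / α)

/-- The characteristic function at time `t` of an `(α/p)`-stable totally right-skewed
Lévy process with scale `C'`. -/
def phi (α C p t l : ℝ) : ℂ :=
  Complex.exp (Complex.ofReal (-(t * Cprime α C p ^ (α / p) * |l| ^ (α / p))) *
    (1 - Complex.I * Complex.ofReal (Real.sign l * Real.tan (π * α / (2 * p)))))

/-!
The characteristic function of `L_s` gives `‖1 - φ(λ)‖ ≤ s C^α (1 + |tan (πα/2)|) |λ|^α`, so the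
truncation inequality `P(|X| > r) ≤ (r/2) ‖∫_{-2/r}^{2/r} (1 - φ)‖` yields the tail bound
`P(|L_s| > r) ≤ K s r^{-α}`. Since `p > α`, the layer-cake formula turns it into
`E[min(|L_s|^p, ε)] ≤ K' s ε^{1 - α/p}`. Finally `V_p^n(L)_θ ≥ ε` forces
`∑ min(|Δ_i^n L|^p, ε) ≥ ε`, and Markov's inequality with stationary increments bounds its
probability by `⌊nθ⌋ K' / (n ε) ≤ θ K' / ε`, uniformly in `n`.
-/

theorem Real.abs_sign_le_one (x : ℝ) : |Real.sign x| ≤ 1 := by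
  rcases Real.sign_apply_eq x with h | h | h <;> simp [h]

theorem Complex.norm_one_sub_exp_le_of_re_nonpos {z : ℂ} (hz : z.re ≤ 0) :
    ‖1 - Complex.exp z‖ ≤ -z.re + |z.im| := by
  have hsplit : 1 - Complex.exp z =
      (1 - Real.exp z.re : ℝ) + Real.exp z.re * (1 - Complex.exp (Complex.I * z.im)) := by
    conv_lhs => rw [← Complex.re_add_im z]
    rw [Complex.exp_add, Complex.ofReal_exp, mul_comm (z.im : ℂ)]
    push_cast; ring
  have hexp_le : Real.exp z.re ≤ 1 := Real.exp_le_one_iff.2 hz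
  calc ‖1 - Complex.exp z‖
      ≤ |1 - Real.exp z.re| + Real.exp z.re * ‖1 - Complex.exp (Complex.I * z.im)‖ := by
        rw [hsplit]
        refine (norm_add_le _ _).trans ?_
        rw [norm_mul, Complex.norm_real, Complex.norm_real, Real.norm_eq_abs, Real.norm_eq_abs,
          abs_of_pos (Real.exp_pos _)]
    _ ≤ -z.re + 1 * |z.im| := by
        rw [abs_of_nonneg (by linarith)]
        gcongr
        · linarith [Real.add_one_le_exp z.re]
        · rw [norm_sub_rev]; exact Real.norm_exp_I_mul_ofReal_sub_one_le
    _ = -z.re + |z.im| := by rw [one_mul]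

theorem measureReal_abs_gt_le_of_norm_one_sub_charFun_le {μ : Measure ℝ} [IsProbabilityMeasure μ]
    {c α r : ℝ} (hα : 0 ≤ α) (hr : 0 < r) (h : ∀ t, ‖1 - charFun μ t‖ ≤ c * |t| ^ α) :
    μ.real {x | r < |x|} ≤ 2 ^ (α + 1) * c * r ^ (-α) := by
  have hc : 0 ≤ c := by simpa using (norm_nonneg _).trans (h 1)
  set u := 2 * r⁻¹ with hu
  have hu0 : 0 < u := by positivity
  have hbound : ∀ t ∈ Set.uIoc (-u) u, ‖1 - charFun μ t‖ ≤ c * u ^ α := by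
    intro t ht
    rw [Set.uIoc_of_le (by linarith)] at ht
    exact (h t).trans (by gcongr; exact abs_le.2 ⟨ht.1.le, ht.2⟩)
  calc μ.real {x | r < |x|} ≤ 2⁻¹ * r * ‖∫ t in (-2 * r⁻¹)..(2 * r⁻¹), 1 - charFun μ t‖ :=
        measureReal_abs_gt_le_integral_charFun hr
    _ ≤ 2⁻¹ * r * (c * u ^ α * |u - -u|) := by
        rw [neg_mul]
        gcongr
        exact intervalIntegral.norm_integral_le_of_norm_le_const hbound
    _ = 2 ^ (α + 1) * c * r ^ (-α) := by
        rw [hu, Real.mul_rpow (by norm_num) (by positivity), Real.inv_rpow hr.le,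
          Real.rpow_neg hr.le, Real.rpow_add_one two_ne_zero, sub_neg_eq_add,
          abs_of_pos (by positivity)]
        field_simp
        ring

theorem lintegral_min_rpow_le_of_measure_abs_gt_le {μ : Measure ℝ} {K α p ε : ℝ}
    (hK : 0 ≤ K) (hp : 0 < p) (hαp : α < p) (hε : 0 < ε)
    (htail : ∀ r > 0, μ {x | r < |x|} ≤ ENNReal.ofReal (K * r ^ (-α))) :
    ∫⁻ x, ENNReal.ofReal (min (|x| ^ p) ε) ∂μ ≤
      ENNReal.ofReal (K * (p / (p - α)) * ε ^ (1 - α / p)) := by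
  have hexp : -1 < -(α / p) := by
    have : α / p < 1 := (div_lt_one hp).2 hαp
    linarith
  have hlevel : ∀ t ∈ Set.Ioi (0 : ℝ), μ {x | t < min (|x| ^ p) ε} ≤
      (Set.Ioc 0 ε).indicator (fun t => ENNReal.ofReal (K * t ^ (-(α / p)))) t := by
    intro t (ht : 0 < t)
    rcases le_or_gt ε t with hεt | htε
    · have hempty : {x : ℝ | t < min (|x| ^ p) ε} = ∅ :=
        Set.eq_empty_of_forall_notMem fun x hx => (hx.trans_le (min_le_right _ _)).not_ge hεt
      rw [hempty, measure_empty]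
      exact zero_le
    rw [Set.indicator_of_mem (Set.mem_Ioc.2 ⟨ht, htε.le⟩)]
    have hsub : {x : ℝ | t < min (|x| ^ p) ε} ⊆ {x | t ^ p⁻¹ < |x|} := fun x hx =>
      (Real.rpow_inv_lt_iff_of_pos ht.le (abs_nonneg x) hp).2 (hx.trans_le (min_le_left _ _))
    calc μ {x | t < min (|x| ^ p) ε} ≤ μ {x | t ^ p⁻¹ < |x|} := measure_mono hsub
      _ ≤ ENNReal.ofReal (K * (t ^ p⁻¹) ^ (-α)) := htail _ (by positivity)
      _ = ENNReal.ofReal (K * t ^ (-(α / p))) := by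
        rw [← Real.rpow_mul ht.le]; ring_nf
  have hint : IntegrableOn (fun t : ℝ => K * t ^ (-(α / p))) (Set.Ioc 0 ε) := by
    rw [← Set.uIoc_of_le hε.le, ← intervalIntegrable_iff]
    exact (intervalIntegral.intervalIntegrable_rpow' hexp).const_mul K
  rw [lintegral_eq_lintegral_meas_lt μ (ae_of_all _ fun x => by positivity) (by fun_prop)]
  calc ∫⁻ t in Set.Ioi 0, μ {x | t < min (|x| ^ p) ε}
      ≤ ∫⁻ t in Set.Ioi 0, (Set.Ioc 0 ε).indicator
          (fun t => ENNReal.ofReal (K * t ^ (-(α / p)))) t :=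
        setLIntegral_mono' measurableSet_Ioi hlevel
    _ = ∫⁻ t in Set.Ioc 0 ε, ENNReal.ofReal (K * t ^ (-(α / p))) := by
        rw [lintegral_indicator measurableSet_Ioc, Measure.restrict_restrict measurableSet_Ioc,
          Set.inter_eq_left.2 Set.Ioc_subset_Ioi_self]
    _ = ENNReal.ofReal (∫ t in Set.Ioc 0 ε, K * t ^ (-(α / p))) :=
        (ofReal_integral_eq_lintegral_ofReal hint
          ((ae_restrict_mem measurableSet_Ioc).mono fun t ht => by
            have : 0 < t := ht.1
            positivity)).symm
    _ = ENNReal.ofReal (K * (p / (p - α)) * ε ^ (1 - α / p)) := by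
        rw [integral_const_mul, ← intervalIntegral.integral_of_le hε.le,
          integral_rpow (Or.inl hexp), Real.zero_rpow (by linarith)]
        have hexp_succ : -(α / p) + 1 = (p - α) / p := by field_simp; ring
        have hpα : p - α ≠ 0 := by linarith
        rw [hexp_succ, show 1 - α / p = (p - α) / p by field_simp]
        congr 1
        field_simp
        rw [sub_zero]

theorem le_sum_min_of_le_sum {ι : Type*} {s : Finset ι} {a : ι → ℝ} (ha : ∀ i ∈ s, 0 ≤ a i)
    {ε : ℝ} (hε : 0 ≤ ε) (h : ε ≤ ∑ i ∈ s, a i) : ε ≤ ∑ i ∈ s, min (a i) ε := by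
  by_cases hbig : ∃ i ∈ s, ε ≤ a i
  · obtain ⟨i, hi, hεi⟩ := hbig
    calc ε = min (a i) ε := (min_eq_right hεi).symm
      _ ≤ ∑ j ∈ s, min (a j) ε := Finset.single_le_sum (fun j hj => le_min (ha j hj) hε) hi
  · push Not at hbig
    rwa [Finset.sum_congr rfl fun i hi => min_eq_left (hbig i hi).le]

theorem measure_le_sum_le_sum_lintegral_min_div (μ : Measure Ω) {ι : Type*} (s : Finset ι)
    {X : ι → Ω → ℝ} (hX : ∀ i, Measurable (X i)) (hX0 : ∀ i ω, 0 ≤ X i ω) {ε : ℝ} (hε : 0 < ε) :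
    μ {ω | ε ≤ ∑ i ∈ s, X i ω} ≤
      (∑ i ∈ s, ∫⁻ ω, ENNReal.ofReal (min (X i ω) ε) ∂μ) / ENNReal.ofReal ε := by
  have hsub : {ω | ε ≤ ∑ i ∈ s, X i ω} ⊆
      {ω | ENNReal.ofReal ε ≤ ∑ i ∈ s, ENNReal.ofReal (min (X i ω) ε)} := fun ω hω => by
    rw [Set.mem_ofPred_eq, ← ENNReal.ofReal_sum_of_nonneg fun i _ => le_min (hX0 i ω) hε.le]
    exact ENNReal.ofReal_le_ofReal (le_sum_min_of_le_sum (fun i _ => hX0 i ω) hε.le hω)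
  calc μ {ω | ε ≤ ∑ i ∈ s, X i ω}
      ≤ μ {ω | ENNReal.ofReal ε ≤ ∑ i ∈ s, ENNReal.ofReal (min (X i ω) ε)} := measure_mono hsub
    _ ≤ (∫⁻ ω, ∑ i ∈ s, ENNReal.ofReal (min (X i ω) ε) ∂μ) / ENNReal.ofReal ε :=
        meas_ge_le_lintegral_div (by fun_prop) (by simpa using hε) ENNReal.ofReal_ne_top
    _ = _ := by rw [lintegral_finsetSum _ fun i _ => by fun_prop]

theorem measure_le_pVar_le_of_lintegral_min_le (P : Measure Ω) {X : ℝ → Ω → ℝ}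
    (hX : ∀ t, Measurable (X t)) {p ε M θ : ℝ} (hε : 0 < ε) (hM : 0 ≤ M) (hθ : 0 ≤ θ)
    (hincr : ∀ s t, 0 ≤ s → s ≤ t →
      ∫⁻ ω, ENNReal.ofReal (min (|X t ω - X s ω| ^ p) ε) ∂P ≤ ENNReal.ofReal (M * (t - s)))
    (n : ℕ) :
    P {ω | ε ≤ pVar p n X θ ω} ≤ ENNReal.ofReal (θ * M / ε) := by
  set N := ⌊(n : ℝ) * θ⌋₊
  have hterm : ∀ i ∈ Finset.Icc 1 N, ∫⁻ ω, ENNReal.ofReal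
      (min (|X ((i : ℝ) / n) ω - X (((i : ℝ) - 1) / n) ω| ^ p) ε) ∂P ≤
        ENNReal.ofReal (M / n) := by
    intro i hi
    have hi1 : (1 : ℝ) ≤ i := by exact_mod_cast (Finset.mem_Icc.1 hi).1
    convert hincr (((i : ℝ) - 1) / n) ((i : ℝ) / n) (div_nonneg (by linarith) n.cast_nonneg)
      (by gcongr; linarith) using 2
    rw [← sub_div, sub_sub_cancel, mul_one_div]
  have hcount : (N : ℝ) * (M / n) ≤ θ * M := by
    rcases (Nat.cast_nonneg n : (0 : ℝ) ≤ n).eq_or_lt with hn | hn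
    · rw [← hn, div_zero, mul_zero]; positivity
    · calc (N : ℝ) * (M / n) = N / n * M := by ring
        _ ≤ θ * M := by
          gcongr
          exact (div_le_iff₀' hn).2 (Nat.floor_le (by positivity))
  calc P {ω | ε ≤ pVar p n X θ ω}
      ≤ (∑ i ∈ Finset.Icc 1 N, ∫⁻ ω, ENNReal.ofReal
          (min (|X ((i : ℝ) / n) ω - X (((i : ℝ) - 1) / n) ω| ^ p) ε) ∂P) / ENNReal.ofReal ε :=
        measure_le_sum_le_sum_lintegral_min_div P _ (fun i => by fun_prop)
          (fun i ω => by positivity) hε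
    _ ≤ (∑ _i ∈ Finset.Icc 1 N, ENNReal.ofReal (M / n)) / ENNReal.ofReal ε := by
        gcongr with i hi
        exact hterm i hi
    _ ≤ ENNReal.ofReal (θ * M) / ENNReal.ofReal ε := by
        gcongr
        rw [Finset.sum_const, Nat.card_Icc, Nat.add_sub_cancel, nsmul_eq_mul,
          ← ENNReal.ofReal_natCast, ← ENNReal.ofReal_mul (by positivity)]
        exact ENNReal.ofReal_le_ofReal hcount
    _ = ENNReal.ofReal (θ * M / ε) := (ENNReal.ofReal_div_of_pos hε).symm

namespace IsStableLevy

variable {P : Measure Ω} {α C β : ℝ} {L : ℝ → Ω → ℝ}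

theorem map_sub_eq (hL : IsStableLevy P α C β L) {s t : ℝ} (hs : 0 ≤ s) (hst : s ≤ t) :
    P.map (fun ω => L t ω - L s ω) = P.map (L (t - s)) := by
  simpa using hL.statIncr s (t - s) hs (sub_nonneg.2 hst)

theorem charFun_map (hL : IsStableLevy P α C β L) {t : ℝ} (ht : 0 ≤ t) (l : ℝ) :
    MeasureTheory.charFun (P.map (L t)) l =
      Complex.exp (Complex.ofReal (-(t * C ^ α * |l| ^ α)) *
        (1 - Complex.I * Complex.ofReal (β * Real.sign l * Real.tan (π * α / 2)))) := by
  rw [charFun_apply_real, integral_map (hL.measurable t).aemeasurable (by fun_prop),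
    ← hL.charFun t ht l]
  simp_rw [mul_comm Complex.I, mul_right_comm]

theorem norm_one_sub_charFun_map_le (hL : IsStableLevy P α C β L) (hC : 0 ≤ C)
    (hβ : β ∈ Set.Icc (-1 : ℝ) 1) {t : ℝ} (ht : 0 ≤ t) (l : ℝ) :
    ‖1 - MeasureTheory.charFun (P.map (L t)) l‖ ≤
      t * C ^ α * (1 + |Real.tan (π * α / 2)|) * |l| ^ α := by
  rw [hL.charFun_map ht]
  set a := t * C ^ α * |l| ^ α
  set b := β * Real.sign l * Real.tan (π * α / 2)
  have ha : 0 ≤ a := by positivity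
  have hb : |b| ≤ |Real.tan (π * α / 2)| := by
    rw [abs_mul, abs_mul]
    have hβ1 : |β| ≤ 1 := abs_le.2 hβ
    calc |β| * |Real.sign l| * |Real.tan (π * α / 2)| ≤ 1 * 1 * |Real.tan (π * α / 2)| := by
          gcongr
          exact Real.abs_sign_le_one l
      _ = _ := by ring
  calc ‖1 - Complex.exp (Complex.ofReal (-a) * (1 - Complex.I * Complex.ofReal b))‖
        ≤ a + |a * b| := by
        clear_value a b
        refine (Complex.norm_one_sub_exp_le_of_re_nonpos ?_).trans_eq ?_ <;> simp [ha]
    _ ≤ a + a * |Real.tan (π * α / 2)| := by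
        rw [abs_mul, abs_of_nonneg ha]; gcongr
    _ = _ := by ring

theorem measure_map_abs_gt_le (hL : IsStableLevy P α C β L) [IsProbabilityMeasure P]
    (hα : 0 ≤ α) (hC : 0 ≤ C) (hβ : β ∈ Set.Icc (-1 : ℝ) 1) {t r : ℝ} (ht : 0 ≤ t) (hr : 0 < r) :
    P.map (L t) {x | r < |x|} ≤
      ENNReal.ofReal (2 ^ (α + 1) * C ^ α * (1 + |Real.tan (π * α / 2)|) * t * r ^ (-α)) := by
  have := Measure.isProbabilityMeasure_map (μ := P) (hL.measurable t).aemeasurable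
  rw [← ofReal_measureReal]
  refine ENNReal.ofReal_le_ofReal ?_
  convert measureReal_abs_gt_le_of_norm_one_sub_charFun_le hα hr
    (hL.norm_one_sub_charFun_map_le hC hβ ht) using 1
  ring

theorem lintegral_min_abs_sub_rpow_le (hL : IsStableLevy P α C β L) [IsProbabilityMeasure P]
    (hα : 0 ≤ α) (hC : 0 ≤ C) (hβ : β ∈ Set.Icc (-1 : ℝ) 1) {p ε s t : ℝ} (hαp : α < p)
    (hε : 0 < ε) (hs : 0 ≤ s) (hst : s ≤ t) :
    ∫⁻ ω, ENNReal.ofReal (min (|L t ω - L s ω| ^ p) ε) ∂P ≤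
      ENNReal.ofReal (2 ^ (α + 1) * C ^ α * (1 + |Real.tan (π * α / 2)|) * (p / (p - α)) *
        ε ^ (1 - α / p) * (t - s)) := by
  have hK : 0 ≤ 2 ^ (α + 1) * C ^ α * (1 + |Real.tan (π * α / 2)|) * (t - s) := by
    have := sub_nonneg.2 hst
    positivity
  rw [← lintegral_map (f := fun x => ENNReal.ofReal (min (|x| ^ p) ε))
    (g := fun ω => L t ω - L s ω) (by fun_prop) ((hL.measurable t).sub (hL.measurable s)),
    hL.map_sub_eq hs hst]
  convert lintegral_min_rpow_le_of_measure_abs_gt_le hK (hα.trans_lt hαp) hαp hε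
    fun r hr => (hL.measure_map_abs_gt_le hα hC hβ (sub_nonneg.2 hst) hr).trans_eq
      (by ring_nf) using 2
  ring

end IsStableLevy

theorem tightness_estimate_sup_general (P : Measure Ω) [IsProbabilityMeasure P]
    (α C β p : ℝ) (hα : α ∈ Set.Ioo (0 : ℝ) 2) (hC : 0 < C)
    (hβ : β ∈ Set.Icc (-1 : ℝ) 1) (L : ℝ → Ω → ℝ)
    (hL : IsStableLevy P α C β L) (hp : α < p) :
    ∀ ε δ : ℝ, 0 < ε → 0 < δ → ∃ θ₀ : ℝ, 0 < θ₀ ∧ ∀ θ ∈ Set.Ioo (0 : ℝ) θ₀,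
      Filter.limsup (fun n : ℕ => P {ω | ε ≤ pVar p n L θ ω}) atTop
        ≤ ENNReal.ofReal δ := by
  intro ε δ hε hδ
  have hα0 : 0 < α := hα.1
  have hpα : 0 < p / (p - α) := div_pos (hα0.trans hp) (sub_pos.2 hp)
  set M := 2 ^ (α + 1) * C ^ α * (1 + |Real.tan (π * α / 2)|) * (p / (p - α)) * ε ^ (1 - α / p)
  have hM : 0 < M := by positivity
  refine ⟨δ * ε / M, by positivity, fun θ hθ => ?_⟩
  have hbound : ∀ n : ℕ, P {ω | ε ≤ pVar p n L θ ω} ≤ ENNReal.ofReal (θ * M / ε) :=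
    measure_le_pVar_le_of_lintegral_min_le P hL.measurable hε hM.le hθ.1.le
      fun s t hs hst => hL.lintegral_min_abs_sub_rpow_le hα0.le hC.le hβ hp hε hs hst
  calc Filter.limsup (fun n : ℕ => P {ω | ε ≤ pVar p n L θ ω}) atTop
      ≤ ENNReal.ofReal (θ * M / ε) := limsup_le_of_le (by isBoundedDefault) (.of_forall hbound)
    _ ≤ ENNReal.ofReal δ := by
        refine ENNReal.ofReal_le_ofReal ?_
        rw [div_le_iff₀ hε]
        exact ((lt_div_iff₀ hM).1 hθ.2).le

theorem tightness_estimate_sup (P : Measure Ω) [IsProbabilityMeasure P]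
    (α C β p : ℝ) (hα : α ∈ Set.Ioo (0 : ℝ) 2) (hα1 : α ≠ 1) (hC : 0 < C)
    (hβ : β ∈ Set.Icc (-1 : ℝ) 1) (L : ℝ → Ω → ℝ)
    (hL : IsStableLevy P α C β L) (hp : α < p) :
    ∀ ε δ : ℝ, 0 < ε → 0 < δ → ∃ θ₀ : ℝ, 0 < θ₀ ∧ ∀ θ ∈ Set.Ioo (0 : ℝ) θ₀,
      Filter.limsup (fun n : ℕ => P {ω | ε ≤ pVar p n L θ ω}) atTop
        ≤ ENNReal.ofReal δ :=
  tightness_estimate_sup_general P α C β p hα hC hβ L hL hp
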